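/- Let X be an infinite Tychonoff space. The following are equivalent: (i) 𝒫_fin(X) has the Hurewicz property; (ii) X satisfies S_fin(Ω_X, Ω_X^gp); (iii) every finite power Xⁿ (n ≥ 1, with the product topology) has the Hurewicz property; (iv) C_p(X) satisfies S_fin(Ω_{C_p(X),𝟎}, Ω_{C_p(X),𝟎}^gp); (v) C_p(X) is Reznichenko and has countable fan-tightness. -/

import Mathlib

open Set TopologicalSpace

universe u

/-- A non-trivial open cover: a family of nonempty proper open sets covering `X`. -/
def NTOpenCover (X : Type u) [TopologicalSpace X] (𝒰 : Set (Set X)) : Prop :=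
  (∀ U ∈ 𝒰, IsOpen U ∧ U.Nonempty ∧ U ≠ Set.univ) ∧ ⋃₀ 𝒰 = Set.univ

/-- `𝒪_X`, the collection of non-trivial open covers of `X`. -/
def OX (X : Type u) [TopologicalSpace X] : Set (Set (Set X)) := {𝒰 | NTOpenCover X 𝒰}

/-- The Hurewicz property. -/
def HurewiczProp (X : Type u) [TopologicalSpace X] : Prop :=
  ∀ 𝒰 : ℕ → Set (Set X), (∀ n, 𝒰 n ∈ OX X) →
    ∃ ℱ : ℕ → Set (Set X), (∀ n, ℱ n ⊆ 𝒰 n ∧ (ℱ n).Finite) ∧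
      ∀ x : X, ∃ m : ℕ, ∀ n ≥ m, x ∈ ⋃₀ ℱ n

/-- The selection principle `S_fin(𝒜, ℬ)`. -/
def Sfin {α : Type u} (𝒜 ℬ : Set (Set α)) : Prop :=
  ∀ 𝒰 : ℕ → Set α, (∀ n, 𝒰 n ∈ 𝒜) →
    ∃ ℱ : ℕ → Set α, (∀ n, ℱ n ⊆ 𝒰 n ∧ (ℱ n).Finite) ∧ (⋃ n, ℱ n) ∈ ℬ

/-- The selection principle `S_1(𝒜, ℬ)`. -/
def Sone {α : Type u} (𝒜 ℬ : Set (Set α)) : Prop :=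
  ∀ 𝒰 : ℕ → Set α, (∀ n, 𝒰 n ∈ 𝒜) →
    ∃ f : ℕ → α, (∀ n, f n ∈ 𝒰 n) ∧ Set.range f ∈ ℬ

/-- A member `C` of a collection `ℭ` is groupable if there is a finite-to-one map
`φ : C → ℕ` such that for every infinite `J ⊆ ℕ`, `⋃ {φ⁻¹(n) : n ∈ J} ∈ ℭ`. -/
def Groupable {α : Type u} (ℭ : Set (Set α)) (C : Set α) : Prop :=
  ∃ φ : α → ℕ, (∀ n : ℕ, {x ∈ C | φ x = n}.Finite) ∧
    ∀ J : Set ℕ, J.Infinite → {x ∈ C | φ x ∈ J} ∈ ℭ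

/-- `ℭ^gp`, the collection of groupable members of `ℭ`. -/
def groupables {α : Type u} (ℭ : Set (Set α)) : Set (Set α) :=
  {C | C ∈ ℭ ∧ Groupable ℭ C}

/-- The Menger property. -/
def MengerProp (X : Type u) [TopologicalSpace X] : Prop := Sfin (OX X) (OX X)

/-- The Rothberger property. -/
def RothbergerProp (X : Type u) [TopologicalSpace X] : Prop := Sone (OX X) (OX X)

/-- The Gerlits-Nagy property: Hurewicz and Rothberger. -/
def GerlitsNagyProp (X : Type u) [TopologicalSpace X] : Prop :=
  HurewiczProp X ∧ RothbergerProp X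

/-- `𝒪_X(𝒜)`, the collection of `𝒜`-covers of `X`. -/
def ACovers (X : Type u) [TopologicalSpace X] (𝒜 : Set (Set X)) : Set (Set (Set X)) :=
  {𝒰 | 𝒰 ∈ OX X ∧ ∀ A ∈ 𝒜, ∃ U ∈ 𝒰, A ⊆ U}

/-- `𝒦_X`, the collection of `k`-covers of `X`. -/
def KCovers (X : Type u) [TopologicalSpace X] : Set (Set (Set X)) :=
  {𝒰 | 𝒰 ∈ OX X ∧ ∀ K : Set X, IsCompact K → K.Nonempty → ∃ U ∈ 𝒰, K ⊆ U}

/-- `Ω_X`, the collection of `ω`-covers of `X`. -/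
def OmegaCovers (X : Type u) [TopologicalSpace X] : Set (Set (Set X)) :=
  {𝒰 | 𝒰 ∈ OX X ∧ ∀ F : Set X, F.Finite → F.Nonempty → ∃ U ∈ 𝒰, F ⊆ U}

/-- An ideal of closed sets of `X`. -/
def IdealOfClosedSets (X : Type u) [TopologicalSpace X] (𝒜 : Set (Set X)) : Prop :=
  (∀ A ∈ 𝒜, IsClosed A ∧ A.Nonempty ∧ A ≠ Set.univ) ∧
  (∀ F : Set X, F.Finite → F.Nonempty → F ∈ 𝒜) ∧
  (∀ A B : Set X, A ∈ 𝒜 → B ∈ 𝒜 → A ∪ B ≠ Set.univ → A ∪ B ∈ 𝒜) ∧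
  (∀ A ∈ 𝒜, ∀ B : Set X, B ⊆ A → IsClosed B → B.Nonempty → B ∈ 𝒜)

/-- One has a winning strategy in the Hurewicz game on `X`. -/
def OneWinsHurewicz (X : Type u) [TopologicalSpace X] : Prop :=
  ∃ σ : List (Set (Set X)) → Set (Set X), (∀ s, σ s ∈ OX X) ∧
    ∀ F : ℕ → Set (Set X),
      (∀ n, (F n).Finite ∧ F n ⊆ σ (List.ofFn fun i : Fin n => F i)) →
        ∃ x : X, ∀ m : ℕ, ∃ n ≥ m, x ∉ ⋃₀ F n

/-- One has a winning strategy in `G_fin(𝒜, ℬ)`. -/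
def OneWinsGfin {α : Type u} (𝒜 ℬ : Set (Set α)) : Prop :=
  ∃ σ : List (Set α) → Set α, (∀ s, σ s ∈ 𝒜) ∧
    ∀ F : ℕ → Set α,
      (∀ n, (F n).Finite ∧ F n ⊆ σ (List.ofFn fun i : Fin n => F i)) →
        (⋃ n, F n) ∉ ℬ

/-- One has a winning predetermined strategy in `G_fin(𝒜, ℬ)`. -/
def OneWinsPreGfin {α : Type u} (𝒜 ℬ : Set (Set α)) : Prop :=
  ∃ σ : ℕ → Set α, (∀ n, σ n ∈ 𝒜) ∧
    ∀ F : ℕ → Set α, (∀ n, (F n).Finite ∧ F n ⊆ σ n) → (⋃ n, F n) ∉ ℬ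

/-- One has a winning strategy in `G_1(𝒜, ℬ)`. -/
def OneWinsGone {α : Type u} (𝒜 ℬ : Set (Set α)) : Prop :=
  ∃ σ : List α → Set α, (∀ s, σ s ∈ 𝒜) ∧
    ∀ f : ℕ → α, (∀ n, f n ∈ σ (List.ofFn fun i : Fin n => f i)) → Set.range f ∉ ℬ

/-- One has a winning predetermined strategy in `G_1(𝒜, ℬ)`. -/
def OneWinsPreGone {α : Type u} (𝒜 ℬ : Set (Set α)) : Prop :=
  ∃ σ : ℕ → Set α, (∀ n, σ n ∈ 𝒜) ∧
    ∀ f : ℕ → α, (∀ n, f n ∈ σ n) → Set.range f ∉ ℬ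

/-- The collection `𝒜` of subsets of `X`, viewed as a hyperspace with the Vietoris topology. -/
def Hyper (X : Type u) (𝒜 : Set (Set X)) : Type u := {K : Set X // K ∈ 𝒜}

/-- The Vietoris topology on `Hyper X 𝒜`. -/
instance Hyper.topologicalSpace (X : Type u) [TopologicalSpace X] (𝒜 : Set (Set X)) :
    TopologicalSpace (Hyper X 𝒜) :=
  TopologicalSpace.generateFrom
    {S | ∃ U : Set X, IsOpen U ∧
      (S = {K : Hyper X 𝒜 | K.1 ⊆ U} ∨ S = {K : Hyper X 𝒜 | (K.1 ∩ U).Nonempty})}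

/-- `𝕂(X)`: the nonempty compact subsets of `X` with the Vietoris topology. -/
abbrev HyperK (X : Type u) [TopologicalSpace X] : Type u :=
  Hyper X {K : Set X | IsCompact K ∧ K.Nonempty}

/-- `𝒫_fin(X)`: the nonempty finite subsets of `X` with the Vietoris topology. -/
abbrev PFin (X : Type u) : Type u :=
  Hyper X {F : Set X | F.Finite ∧ F.Nonempty}

/-- `C_p(X)`: continuous real-valued functions with the topology of pointwise convergence
(the subspace topology from the product topology on `X → ℝ`). -/
abbrev Cp (X : Type u) [TopologicalSpace X] : Type u := {f : X → ℝ // Continuous f}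

/-- `C_k(X)`: continuous real-valued functions with the compact-open topology. -/
def Ck (X : Type u) [TopologicalSpace X] : Type u := {f : X → ℝ // Continuous f}

instance Ck.topologicalSpace (X : Type u) [TopologicalSpace X] : TopologicalSpace (Ck X) :=
  TopologicalSpace.generateFrom
    {S | ∃ (K : Set X) (U : Set ℝ), IsCompact K ∧ IsOpen U ∧
      S = {f : Ck X | ∀ x ∈ K, f.1 x ∈ U}}

/-- The constantly zero function in `C_p(X)`. -/
def zeroCp (X : Type u) [TopologicalSpace X] : Cp X := ⟨fun _ => (0 : ℝ), continuous_const⟩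

/-- The constantly zero function in `C_k(X)`. -/
def zeroCk (X : Type u) [TopologicalSpace X] : Ck X := ⟨fun _ => (0 : ℝ), continuous_const⟩

/-- `Ω_{Y,y}`: the sets having `y` in their closure but not containing `y`. -/
def OmegaPt (Y : Type u) [TopologicalSpace Y] (y : Y) : Set (Set Y) :=
  {A | y ∈ closure A ∧ y ∉ A}

/-- Countable fan-tightness. -/
def CountableFanTightness (Y : Type u) [TopologicalSpace Y] : Prop :=
  ∀ y : Y, Sfin (OmegaPt Y y) (OmegaPt Y y)

/-- Countable strong fan-tightness. -/
def CountableStrongFanTightness (Y : Type u) [TopologicalSpace Y] : Prop :=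
  ∀ y : Y, Sone (OmegaPt Y y) (OmegaPt Y y)

/-- The Reznichenko property: every countable member of `Ω_{Y,y}` is groupable. -/
def Reznichenko (Y : Type u) [TopologicalSpace Y] : Prop :=
  ∀ y : Y, ∀ A ∈ OmegaPt Y y, A.Countable → Groupable (OmegaPt Y y) A

/-!
All five conditions are equivalent to `OmegaHurewicz X`: from every sequence of open ω-covers one
can select finite subfamilies such that each finite set is, from some index on, contained in a
selected member. This is the Hurewicz property of `𝒫_fin(X)` for covers of the form
`{K | K ⊆ U}`; it passes to the finite powers of `X` by a tube lemma for finite sets, and back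
since `𝒫_fin(X)` is the union of the continuous images `z ↦ range z` of the powers.

Groupability comes from playing the Hurewicz game against the strategy that never offers a set
twice: the selected families are then pairwise disjoint, and the `n`-th one is the `n`-th group.
Conversely, a groupable selection from the covers refining `𝒰 0, …, 𝒰 m` is realigned so that
the `k`-th group only contains sets refining `𝒰 k`. In `C_p(X)`, an ω-cover becomes the set of
functions equal to `1` off one of its members (by complete regularity), and a set of functions
accumulating at `g` becomes the ω-covers by the sets `{|f - g| < 1 / (n + 1)}`.
-/

noncomputable section

open Function Filter Topology

/- The Hurewicz selection principle for covers of `P` by elements of `Good`, where `t` covers `p`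
when `R p t`. `HurewiczProp` is the instance `R = (· ∈ ·)` on open sets, and the property
`OmegaHurewicz` below is the instance `R K U := K ⊆ U` on `𝒫_fin(X)` and open sets of `X`. -/
def HurewiczSelection {P T : Type*} (Good : Set T) (R : P → T → Prop) : Prop :=
  ∀ 𝒰 : ℕ → Set T, (∀ n, 𝒰 n ⊆ Good ∧ ∀ p, ∃ t ∈ 𝒰 n, R p t) →
    ∃ ℱ : ℕ → Set T, (∀ n, ℱ n ⊆ 𝒰 n ∧ (ℱ n).Finite) ∧ ∀ p, ∃ m, ∀ n ≥ m, ∃ t ∈ ℱ n, R p t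

namespace HurewiczSelection

variable {P T : Type*} {Good : Set T} {R : P → T → Prop}

theorem comap {T' : Type*} {Good' : Set T'} {R' : P → T' → Prop}
    (h : HurewiczSelection Good R) (g : T' → T) (hg : ∀ t ∈ Good', g t ∈ Good)
    (hR : ∀ p t, R p (g t) → R' p t) (hcov : ∀ p t, t ∈ Good' → R' p t → R p (g t)) :
    HurewiczSelection Good' R' := by
  intro 𝒰 h𝒰
  obtain ⟨ℱ, hℱ, hwit⟩ := h (fun n => g '' 𝒰 n) fun n =>
    ⟨image_subset_iff.2 fun t ht => hg t ((h𝒰 n).1 ht), fun p => by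
      obtain ⟨t, ht, hpt⟩ := (h𝒰 n).2 p
      exact ⟨g t, mem_image_of_mem g ht, hcov p t ((h𝒰 n).1 ht) hpt⟩⟩
  choose ℱ' hℱ'sub hℱ'fin hℱ'eq using fun n =>
    exists_subset_image_finite_and.1 ⟨ℱ n, (hℱ n).1, (hℱ n).2, rfl⟩
  refine ⟨ℱ', fun n => ⟨hℱ'sub n, hℱ'fin n⟩, fun p => ?_⟩
  obtain ⟨m, hm⟩ := hwit p
  refine ⟨m, fun n hn => ?_⟩
  obtain ⟨_, ht, hpt⟩ := hm n hn
  rw [hℱ'eq n] at ht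
  obtain ⟨t, ht, rfl⟩ := ht
  exact ⟨t, ht, hR p t hpt⟩

theorem of_forall_nat {P : ℕ → Type*} {R : ∀ k, P k → T → Prop} {Q : Type*}
    {R' : Q → T → Prop} (h : ∀ k, HurewiczSelection Good (R k))
    (hcov : ∀ 𝒰 ⊆ Good, (∀ q, ∃ t ∈ 𝒰, R' q t) → ∀ k p, ∃ t ∈ 𝒰, R k p t)
    (hR : ∀ q, ∃ k p, ∀ t, R k p t → R' q t) : HurewiczSelection Good R' := by
  intro 𝒰 h𝒰
  choose ℱ hℱ hwit using fun k => h k 𝒰 fun n => ⟨(h𝒰 n).1, hcov _ (h𝒰 n).1 (h𝒰 n).2 k⟩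
  refine ⟨fun n => ⋃ k ∈ Finset.range (n + 1), ℱ k n, fun n => ⟨iUnion₂_subset fun k _ =>
    (hℱ k n).1, (Finset.finite_toSet _).biUnion fun k _ => (hℱ k n).2⟩, fun q => ?_⟩
  obtain ⟨k, p, hpq⟩ := hR q
  obtain ⟨m, hm⟩ := hwit k p
  refine ⟨max m k, fun n hn => ?_⟩
  obtain ⟨t, ht, hpt⟩ := hm n (le_of_max_le_left hn)
  exact ⟨t, mem_biUnion (Finset.mem_range_succ_iff.2 (le_of_max_le_right hn)) ht, hpq t hpt⟩

/- Covers containing the trivial member `u` need not be handled: there one selects `{u}`. -/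
theorem of_ne (u : T) (hu : ∀ p, R p u)
    (h : HurewiczSelection {t ∈ Good | t ≠ u ∧ ∃ p, R p t} R) : HurewiczSelection Good R := by
  classical
  intro 𝒰 h𝒰
  by_cases hu𝒰 : ∃ n₀, u ∉ 𝒰 n₀
  · obtain ⟨n₀, hn₀⟩ := hu𝒰
    let 𝒰' : ℕ → Set T := fun n => {t ∈ 𝒰 n | t ≠ u ∧ ∃ p, R p t}
    have h𝒰' : ∀ n, u ∉ 𝒰 n → 𝒰' n ⊆ {t ∈ Good | t ≠ u ∧ ∃ p, R p t} ∧ ∀ p, ∃ t ∈ 𝒰' n, R p t :=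
      fun n hn => ⟨fun t ht => ⟨(h𝒰 n).1 ht.1, ht.2⟩, fun p =>
        let ⟨t, ht, hpt⟩ := (h𝒰 n).2 p
        ⟨t, ⟨ht, fun htu => hn (htu ▸ ht), p, hpt⟩, hpt⟩⟩
    obtain ⟨ℱ, hℱ, hwit⟩ := h (fun n => if u ∈ 𝒰 n then 𝒰' n₀ else 𝒰' n) fun n => by
      split_ifs with hn
      exacts [h𝒰' n₀ hn₀, h𝒰' n hn]
    refine ⟨fun n => if u ∈ 𝒰 n then {u} else ℱ n, fun n => ?_, fun p => ?_⟩
    · dsimp only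
      split_ifs with hn
      · exact ⟨singleton_subset_iff.2 hn, finite_singleton u⟩
      · have hsub := (hℱ n).1
        rw [if_neg hn] at hsub
        exact ⟨hsub.trans (sep_subset _ _), (hℱ n).2⟩
    · obtain ⟨m, hm⟩ := hwit p
      refine ⟨m, fun n hn => ?_⟩
      dsimp only
      split_ifs
      exacts [⟨u, rfl, hu p⟩, hm n hn]
  · simp only [not_exists, not_not] at hu𝒰
    exact ⟨fun _ => {u}, fun n => ⟨singleton_subset_iff.2 (hu𝒰 n), finite_singleton u⟩,
      fun p => ⟨0, fun _ _ => ⟨u, rfl, hu p⟩⟩⟩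

theorem hurewiczProp {Y : Type u} [TopologicalSpace Y]
    (h : HurewiczSelection {U : Set Y | IsOpen U} (· ∈ ·)) : HurewiczProp Y := fun 𝒰 h𝒰 =>
  h 𝒰 fun n => ⟨fun U hU => ((h𝒰 n).1 U hU).1, fun y => by
    rw [← mem_sUnion, (h𝒰 n).2]; trivial⟩

theorem exists_countable_subcover (h : HurewiczSelection Good R) {𝒰 : Set T} (h𝒰 : 𝒰 ⊆ Good)
    (hcov : ∀ p, ∃ t ∈ 𝒰, R p t) : ∃ 𝒱 ⊆ 𝒰, 𝒱.Countable ∧ ∀ p, ∃ t ∈ 𝒱, R p t := by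
  obtain ⟨ℱ, hℱ, hwit⟩ := h (fun _ => 𝒰) fun _ => ⟨h𝒰, hcov⟩
  refine ⟨⋃ n, ℱ n, iUnion_subset fun n => (hℱ n).1,
    countable_iUnion fun n => (hℱ n).2.countable, fun p => ?_⟩
  obtain ⟨m, hm⟩ := hwit p
  obtain ⟨t, ht, hpt⟩ := hm m le_rfl
  exact ⟨t, mem_iUnion.2 ⟨m, ht⟩, hpt⟩

def histOf {α : Type*} (G : ℕ → α) (n : ℕ) : List α := ((List.range n).map G).reverse

theorem histOf_succ {α : Type*} (G : ℕ → α) (n : ℕ) : histOf G (n + 1) = G n :: histOf G n := by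
  simp [histOf, List.range_succ]

theorem length_histOf {α : Type*} (G : ℕ → α) (n : ℕ) : (histOf G n).length = n := by
  simp [histOf]

theorem mem_histOf {α : Type*} {G : ℕ → α} {n : ℕ} {a : α} :
    a ∈ histOf G n ↔ ∃ j < n, G j = a := by
  simp [histOf]

/-- Decodes a history whose moves are given by finite sets of indices, where `e s` enumerates
the cover offered after the history `s`. -/
def decodeHistory (e : List (Set T) → ℕ → T) : List (Finset ℕ) → List (Set T)
  | [] => []
  | c :: l => (e (decodeHistory e l) '' c) :: decodeHistory e l

theorem exists_finset_image_eq {e : ℕ → T} {s : Set T} (hs : s.Finite) (hse : s ⊆ range e) :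
    ∃ c : Finset ℕ, e '' c = s := by
  rw [← image_univ] at hse
  obtain ⟨c, -, hc, hcs⟩ := exists_subset_image_finite_and.1 ⟨s, hse, hs, rfl⟩
  exact ⟨hc.toFinset, by rw [hc.coe_toFinset, hcs]⟩

/- A Hurewicz-type selection principle defeats every strategy `σ` of the player choosing covers.
Each cover offered by `σ` is first shrunk to a countable one and enumerated, so that the nodes
of the game tree are coded by natural numbers; one application of `h` to the sequence of covers
at all nodes then yields the play, along a strictly increasing sequence of codes. -/
theorem exists_play [Nonempty P] (h : HurewiczSelection Good R) (σ : List (Set T) → Set T)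
    (hσ : ∀ s, σ s ⊆ Good ∧ ∀ p, ∃ t ∈ σ s, R p t) :
    ∃ G : ℕ → Set T, (∀ n, G n ⊆ σ (histOf G n) ∧ (G n).Finite) ∧
      ∀ p, ∃ m, ∀ n ≥ m, ∃ t ∈ G n, R p t := by
  choose τ hτσ hτct hτcov using fun s => h.exists_countable_subcover (hσ s).1 (hσ s).2
  choose e he using fun s => (hτct s).exists_eq_range <|
    let ⟨t, ht, _⟩ := hτcov s (Classical.arbitrary P); ⟨t, ht⟩
  let W : ℕ → Set T := fun k => τ (decodeHistory e ((Encodable.decode k).getD []))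
  have hW : ∀ l, W (Encodable.encode l) = range (e (decodeHistory e l)) := by
    simp [W, he]
  obtain ⟨F, hF, hwin⟩ := h W fun k => ⟨(hτσ _).trans (hσ _).1, hτcov _⟩
  choose code hcode using fun l =>
    exists_finset_image_eq (hF (Encodable.encode l)).2 ((hF _).1.trans (hW l).le)
  let node : ℕ → List (Finset ℕ) := fun n => Nat.rec [] (fun _ l => code l :: l) n
  let G : ℕ → Set T := fun n => F (Encodable.encode (node n))
  have hnode : ∀ n, decodeHistory e (node n) = histOf G n := by
    intro n
    induction n with
    | zero => rfl
    | succ n ih => simp only [node, decodeHistory, histOf_succ, ← ih, hcode]; rfl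
  have hmono : StrictMono fun n => Encodable.encode (node n) := by
    refine strictMono_nat_of_lt_succ fun n => ?_
    simp only [node, Encodable.encode_list_cons]
    exact Nat.lt_succ_of_le (Nat.right_le_pair _ _)
  refine ⟨G, fun n => ⟨?_, (hF _).2⟩, fun p => ?_⟩
  · calc G n ⊆ W (Encodable.encode (node n)) := (hF _).1
      _ = τ (histOf G n) := by simp [W, hnode]
      _ ⊆ σ (histOf G n) := hτσ _
  · obtain ⟨m, hm⟩ := hwin p
    exact ⟨m, fun n hn => hm _ (hn.trans hmono.le_apply)⟩

end HurewiczSelection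

theorem HurewiczProp.hurewiczSelection {Y : Type u} [TopologicalSpace Y] (h : HurewiczProp Y) :
    HurewiczSelection {U : Set Y | IsOpen U} (· ∈ ·) :=
  .of_ne univ (fun _ => trivial) fun 𝒰 h𝒰 => h 𝒰 fun n =>
    ⟨fun _ hU => let ⟨hUo, hUu, y, hy⟩ := (h𝒰 n).1 hU; ⟨hUo, ⟨y, hy⟩, hUu⟩,
      eq_univ_of_forall fun y => let ⟨U, hU, hy⟩ := (h𝒰 n).2 y; ⟨U, hU, hy⟩⟩

/- Unlike members of `OmegaCovers X`, the covers here may contain `univ`. -/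
def OmegaHurewicz (X : Type u) [TopologicalSpace X] : Prop :=
  HurewiczSelection {U : Set X | IsOpen U} fun (K : PFin X) U => K.1 ⊆ U

section PFinRange

variable {X : Type u}

instance [Nonempty X] : Nonempty (PFin X) :=
  ⟨⟨{Classical.arbitrary X}, finite_singleton _, singleton_nonempty _⟩⟩

def pfinRange {ι : Type*} [Finite ι] [Nonempty ι] (z : ι → X) : PFin X :=
  ⟨range z, finite_range z, range_nonempty z⟩

theorem exists_pfinRange_eq (K : PFin X) : ∃ n, ∃ z : Fin (n + 1) → X, pfinRange z = K := by
  obtain ⟨n, f, hf⟩ := K.2.1.fin_embedding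
  cases n with
  | zero =>
    obtain ⟨x, hx⟩ := K.2.2
    rw [← hf] at hx
    exact (hx.choose).elim0
  | succ n => exact ⟨n, f, Subtype.ext hf⟩

end PFinRange

section PFin

variable {X : Type u} [TopologicalSpace X]

theorem mem_omegaCovers {𝒰 : Set (Set X)} (h𝒰 : ∀ U ∈ 𝒰, IsOpen U ∧ U.Nonempty ∧ U ≠ univ)
    (hcov : ∀ K : PFin X, ∃ U ∈ 𝒰, K.1 ⊆ U) : 𝒰 ∈ OmegaCovers X := by
  refine ⟨⟨h𝒰, eq_univ_of_forall fun x => ?_⟩, fun F hF hne => hcov ⟨F, hF, hne⟩⟩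
  obtain ⟨U, hU, hxU⟩ := hcov ⟨{x}, finite_singleton x, singleton_nonempty x⟩
  exact ⟨U, hU, hxU rfl⟩

theorem OmegaHurewicz.of_omegaCovers
    (h : ∀ 𝒰 : ℕ → Set (Set X), (∀ n, 𝒰 n ∈ OmegaCovers X) → ∃ ℱ : ℕ → Set (Set X),
      (∀ n, ℱ n ⊆ 𝒰 n ∧ (ℱ n).Finite) ∧ ∀ K : PFin X, ∃ m, ∀ n ≥ m, ∃ U ∈ ℱ n, K.1 ⊆ U) :
    OmegaHurewicz X :=
  .of_ne univ (fun _ => subset_univ _) fun 𝒰 h𝒰 => h 𝒰 fun n => mem_omegaCovers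
    (fun _ hU => let ⟨hUo, hUu, K, hKU⟩ := (h𝒰 n).1 hU; ⟨hUo, K.2.2.mono hKU, hUu⟩) (h𝒰 n).2

theorem isOpen_setOf_subset {U : Set X} (hU : IsOpen U) : IsOpen {K : PFin X | K.1 ⊆ U} :=
  isOpen_generateFrom_of_mem ⟨U, hU, Or.inl rfl⟩

theorem HurewiczProp.omegaHurewicz (h : HurewiczProp (PFin X)) : OmegaHurewicz X :=
  h.hurewiczSelection.comap (fun U => {K : PFin X | K.1 ⊆ U})
    (fun _ hU => isOpen_setOf_subset hU) (fun _ _ h => h) (fun _ _ _ h => h)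

theorem continuous_pfinRange {ι : Type*} [Finite ι] [Nonempty ι] :
    Continuous (pfinRange : (ι → X) → PFin X) := by
  rw [continuous_generateFrom_iff]
  rintro _ ⟨U, hU, rfl | rfl⟩
  · have : pfinRange ⁻¹' {K : PFin X | K.1 ⊆ U} = ⋂ i, (fun z : ι → X => z i) ⁻¹' U := by
      ext z; simp [pfinRange, range_subset_iff]
    rw [this]
    exact isOpen_iInter_of_finite fun i => hU.preimage (continuous_apply i)
  · have : pfinRange ⁻¹' {K : PFin X | (K.1 ∩ U).Nonempty} =
        ⋃ i, (fun z : ι → X => z i) ⁻¹' U := by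
      ext z; simp [pfinRange, Set.Nonempty]
    rw [this]
    exact isOpen_iUnion fun i => hU.preimage (continuous_apply i)

theorem hurewiczProp_pfin_of_forall (h : ∀ n, HurewiczProp (Fin (n + 1) → X)) :
    HurewiczProp (PFin X) :=
  HurewiczSelection.hurewiczProp <| .of_forall_nat
    (R := fun n (z : Fin (n + 1) → X) (S : Set (PFin X)) => pfinRange z ∈ S)
    (fun n => (h n).hurewiczSelection.comap (fun S => pfinRange ⁻¹' S)
      (fun _ hS => hS.preimage continuous_pfinRange) (fun _ _ h => h) (fun _ _ _ h => h))
    (fun _ _ hcov _ _ => hcov _)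
    (fun K => let ⟨n, z, hz⟩ := exists_pfinRange_eq K; ⟨n, z, fun _ hS => hz ▸ hS⟩)

end PFin

section Powers

variable {X : Type u} [TopologicalSpace X]

theorem exists_isOpen_pi_subset {ι : Type*} [Finite ι] {F : Set X} (hF : F.Finite)
    {W : Set (ι → X)} (hW : IsOpen W) (hFW : univ.pi (fun _ => F) ⊆ W) :
    ∃ U, IsOpen U ∧ F ⊆ U ∧ univ.pi (fun _ => U) ⊆ W := by
  have hbox : ∀ t ∈ univ.pi (fun _ => F), ∃ V : ι → Set X, (∀ i, V i ∈ 𝓝 (t i)) ∧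
      univ.pi V ⊆ W := fun t ht => by
    have hWt : W ∈ Filter.pi fun i => 𝓝 (t i) := by rw [← nhds_pi]; exact hW.mem_nhds (hFW ht)
    obtain ⟨I, V, hV, hVW⟩ := Filter.mem_pi'.1 hWt
    exact ⟨V, hV, fun z hz => hVW fun i _ => hz i trivial⟩
  choose! V hV hVW using hbox
  have hT : (univ.pi fun _ : ι => F).Finite := Set.Finite.pi fun _ => hF
  -- near `x ∈ F`, stay in every box coordinate `V t i` with `t i = x`
  have hU₀ : (⋃ x ∈ F, ⋂ t ∈ univ.pi (fun _ => F), ⋂ i ∈ {i | t i = x}, V t i) ∈ 𝓝ˢ F :=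
    mem_nhdsSet_iff_forall.2 fun x hx => by
      refine mem_of_superset ?_ (subset_biUnion_of_mem
        (u := fun x => ⋂ t ∈ univ.pi (fun _ => F), ⋂ i ∈ {i | t i = x}, V t i) hx)
      exact (biInter_mem hT).2 fun t ht =>
        (biInter_mem (toFinite {i | t i = x})).2 fun i (hi : t i = x) => hi ▸ hV t ht i
  obtain ⟨U, hU, hFU, hUU₀⟩ := mem_nhdsSet_iff_exists.1 hU₀
  refine ⟨U, hU, hFU, fun z hz => ?_⟩
  choose x hx hzx using fun i => mem_iUnion₂.1 (hUU₀ (hz i trivial))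
  have hxT : x ∈ univ.pi fun _ => F := fun i _ => hx i
  exact hVW x hxT fun i _ => mem_iInter₂.1 (mem_iInter₂.1 (hzx i) x hxT) i rfl

theorem OmegaHurewicz.hurewiczSelection_pi (h : OmegaHurewicz X) (ι : Type*) [Finite ι]
    [Nonempty ι] : HurewiczSelection {W : Set (ι → X) | IsOpen W} (· ∈ ·) := by
  intro 𝒱 h𝒱
  let 𝒰 : ℕ → Set (Set X) := fun m =>
    {U | IsOpen U ∧ ∃ 𝒢 ⊆ 𝒱 m, 𝒢.Finite ∧ univ.pi (fun _ => U) ⊆ ⋃₀ 𝒢}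
  have h𝒰 : ∀ m (K : PFin X), ∃ U ∈ 𝒰 m, K.1 ⊆ U := by
    intro m K
    choose! V hV hmem using fun t (_ : t ∈ univ.pi fun _ : ι => K.1) => (h𝒱 m).2 t
    obtain ⟨U, hU, hKU, hUV⟩ := exists_isOpen_pi_subset K.2.1
      (isOpen_sUnion <| forall_mem_image.2 fun t ht => (h𝒱 m).1 (hV t ht))
      fun t ht => ⟨V t, mem_image_of_mem V ht, hmem t ht⟩
    exact ⟨U, ⟨hU, _, image_subset_iff.2 hV, (Set.Finite.pi fun _ => K.2.1).image V, hUV⟩, hKU⟩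
  obtain ⟨ℱ, hℱ, hwit⟩ := h 𝒰 fun m => ⟨fun U hU => hU.1, h𝒰 m⟩
  choose! 𝒢 h𝒢sub h𝒢fin h𝒢 using fun m U (hU : U ∈ 𝒰 m) => hU.2
  refine ⟨fun m => ⋃ U ∈ ℱ m, 𝒢 m U, fun m => ⟨iUnion₂_subset fun U hU =>
    h𝒢sub m U ((hℱ m).1 hU), (hℱ m).2.biUnion fun U hU => h𝒢fin m U ((hℱ m).1 hU)⟩, fun z => ?_⟩
  obtain ⟨m₀, hm₀⟩ := hwit (pfinRange z)
  refine ⟨m₀, fun m hm => ?_⟩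
  obtain ⟨U, hU, hzU⟩ := hm₀ m hm
  obtain ⟨W, hW, hzW⟩ := h𝒢 m U ((hℱ m).1 hU) fun i _ => hzU (mem_range_self i)
  exact ⟨W, mem_biUnion hU hW, hzW⟩

theorem OmegaHurewicz.hurewiczProp_pi (h : OmegaHurewicz X) :
    ∀ n : ℕ, 1 ≤ n → HurewiczProp (Fin n → X) := fun n hn =>
  have : Nonempty (Fin n) := ⟨⟨0, hn⟩⟩
  (h.hurewiczSelection_pi (Fin n)).hurewiczProp

end Powers

section Groupable

variable {α : Type*}

theorem iUnion_mem_groupables {ℭ : Set (Set α)} {G : ℕ → Set α} (hfin : ∀ n, (G n).Finite)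
    (hdisj : Pairwise (Disjoint on G)) (h : ∀ J : Set ℕ, J.Infinite → (⋃ n ∈ J, G n) ∈ ℭ) :
    (⋃ n, G n) ∈ groupables ℭ := by
  classical
  let φ : α → ℕ := fun a => if ha : ∃ n, a ∈ G n then Nat.find ha else 0
  have hφ : ∀ {a n}, a ∈ G n → φ a = n := fun {a n} ha => by
    have hex : ∃ n, a ∈ G n := ⟨n, ha⟩
    simp only [φ, dif_pos hex]
    by_contra hne
    exact disjoint_left.1 (hdisj hne) (Nat.find_spec hex) ha
  have hJ : ∀ J : Set ℕ, {a ∈ ⋃ n, G n | φ a ∈ J} = ⋃ n ∈ J, G n := fun J => by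
    ext a
    simp only [mem_iUnion, exists_prop]
    constructor
    · rintro ⟨⟨n, ha⟩, haJ⟩
      exact ⟨n, hφ ha ▸ haJ, ha⟩
    · rintro ⟨n, hn, ha⟩
      exact ⟨⟨n, ha⟩, (hφ ha).symm ▸ hn⟩
  refine ⟨by simpa using h univ infinite_univ, φ, fun n => (hfin n).subset ?_, fun J hJinf => ?_⟩
  · rintro a ⟨ha, rfl⟩
    obtain ⟨m, ha⟩ := mem_iUnion.1 ha
    rwa [hφ ha]
  · rw [hJ]
    exact h J hJinf

theorem exists_forall_ge_of_groupable {ℭ : Set (Set α)} {C : Set α} {φ : α → ℕ}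
    (hφ : ∀ J : Set ℕ, J.Infinite → {x ∈ C | φ x ∈ J} ∈ ℭ) {Q : α → Prop}
    (hQ : ∀ D ∈ ℭ, ∃ x ∈ D, Q x) : ∃ m, ∀ j ≥ m, ∃ x ∈ C, φ x = j ∧ Q x := by
  by_contra! hbad
  have hJ : {j | ∀ x ∈ C, φ x = j → ¬Q x}.Infinite := infinite_of_forall_exists_gt fun m =>
    let ⟨j, hj, hjbad⟩ := hbad (m + 1); ⟨j, hjbad, hj⟩
  obtain ⟨x, ⟨hxC, hxJ⟩, hQx⟩ := hQ _ (hφ _ hJ)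
  exact hxJ x hxC rfl hQx

theorem Groupable.of_subset {ℭ : Set (Set α)} {A B : Set α} (hB : Groupable ℭ B) (hBA : B ⊆ A)
    (hA : A.Countable) (hℭ : ∀ D ∈ ℭ, ∀ D', D ⊆ D' → D' ⊆ A → D' ∈ ℭ) : Groupable ℭ A := by
  classical
  obtain ⟨ψ, hψfin, hψ⟩ := hB
  obtain ⟨f, hf⟩ := countable_iff_exists_injOn.1 hA
  refine ⟨fun a => if a ∈ B then ψ a else f a, fun n => ?_,
    fun J hJ => hℭ _ (hψ J hJ) _ ?_ (sep_subset _ _)⟩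
  · have hsub : ({a ∈ A | f a = n} : Set α).Subsingleton := fun a ha b hb =>
      hf ha.1 hb.1 (ha.2.trans hb.2.symm)
    refine ((hψfin n).union hsub.finite).subset ?_
    rintro a ⟨haA, hn⟩
    by_cases haB : a ∈ B
    · exact Or.inl ⟨haB, by simpa [haB] using hn⟩
    · exact Or.inr ⟨haA, by simpa [haB] using hn⟩
  · rintro a ⟨haB, haJ⟩
    exact ⟨hBA haB, by simpa [haB] using haJ⟩

theorem exists_strictMono_le_stage {ι : Type*} {C : Set ι} (stage φ : ι → ℕ)
    (h : ∀ k, {c ∈ C | stage c < k}.Finite) :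
    ∃ a : ℕ → ℕ, StrictMono a ∧ ∀ k, ∀ c ∈ C, φ c = a k → k ≤ stage c := by
  choose M hM using fun k => ((h k).image φ).bddAbove
  refine ⟨fun k => ∑ i ∈ Finset.range (k + 1), (M i + 1),
    strictMono_nat_of_lt_succ fun k => ?_, fun k c hc hφ => ?_⟩
  · rw [Finset.sum_range_succ _ (k + 1)]
    omega
  · beta_reduce at hφ
    by_contra hlt
    have hle : φ c ≤ M k := hM k ⟨c, ⟨hc, not_le.1 hlt⟩, rfl⟩
    have hge : M k + 1 ≤ ∑ i ∈ Finset.range (k + 1), (M i + 1) :=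
      Finset.single_le_sum (f := fun i => M i + 1) (fun _ _ => Nat.zero_le _)
        (Finset.self_mem_range_succ k)
    omega

/- A member `c` chosen at stage `n` refines the covers `𝒰 j` for all `j ≤ n`; the groups `a k`
are chosen so late that all their members were chosen at stage at least `k`. -/
theorem exists_selection_of_groupable {X : Type u} {ι : Type*} {𝒰 : ℕ → Set (Set X)} {ℱ : ℕ → Set ι}
    (hℱ : ∀ n, (ℱ n).Finite) (V : ι → Set X) (hV : ∀ n, ∀ c ∈ ℱ n, ∀ j ≤ n, ∃ U ∈ 𝒰 j, V c ⊆ U)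
    {φ : ι → ℕ} (hφ : ∀ j, {c ∈ ⋃ n, ℱ n | φ c = j}.Finite)
    (hgroup : ∀ K : PFin X, ∃ m, ∀ j ≥ m, ∃ c ∈ ⋃ n, ℱ n, φ c = j ∧ K.1 ⊆ V c) :
    ∃ 𝒢 : ℕ → Set (Set X), (∀ k, 𝒢 k ⊆ 𝒰 k ∧ (𝒢 k).Finite) ∧
      ∀ K : PFin X, ∃ m, ∀ k ≥ m, ∃ U ∈ 𝒢 k, K.1 ⊆ U := by
  classical
  let stage : ι → ℕ := fun c => if hc : ∃ n, c ∈ ℱ n then Nat.find hc else 0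
  have hstage : ∀ c ∈ ⋃ n, ℱ n, c ∈ ℱ (stage c) := fun c hc => by
    simp only [stage, dif_pos (mem_iUnion.1 hc)]
    exact Nat.find_spec (mem_iUnion.1 hc)
  obtain ⟨a, ha, haC⟩ := exists_strictMono_le_stage stage φ fun k =>
    ((Finset.range k).finite_toSet.biUnion fun n _ => hℱ n).subset fun c ⟨hc, hk⟩ =>
      mem_biUnion (Finset.mem_coe.2 (Finset.mem_range.2 hk)) (hstage c hc)
  choose! g hg hVg using fun c (hc : c ∈ ⋃ n, ℱ n) j (hj : j ≤ stage c) =>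
    hV _ c (hstage c hc) j hj
  refine ⟨fun k => (fun c => g c k) '' {c ∈ ⋃ n, ℱ n | φ c = a k},
    fun k => ⟨?_, (hφ _).image _⟩, fun K => ?_⟩
  · rintro _ ⟨c, ⟨hc, hck⟩, rfl⟩
    exact hg c hc k (haC k c hc hck)
  · obtain ⟨m, hm⟩ := hgroup K
    refine ⟨m, fun k hk => ?_⟩
    obtain ⟨c, hc, hck, hKc⟩ := hm (a k) (hk.trans ha.le_apply)
    exact ⟨g c k, ⟨c, ⟨hc, hck⟩, rfl⟩, hKc.trans (hVg c hc k (haC k c hc hck))⟩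

end Groupable

section Realignment

variable {X : Type u} [TopologicalSpace X]

def refiningCovers (𝒰 : ℕ → Set (Set X)) (m : ℕ) : Set (Set X) :=
  {V | (IsOpen V ∧ V.Nonempty ∧ V ≠ univ) ∧ ∀ j ≤ m, ∃ U ∈ 𝒰 j, V ⊆ U}

theorem refiningCovers_mem_omegaCovers {𝒰 : ℕ → Set (Set X)} (h𝒰 : ∀ n, 𝒰 n ∈ OmegaCovers X)
    (m : ℕ) : refiningCovers 𝒰 m ∈ OmegaCovers X := by
  refine mem_omegaCovers (fun V hV => hV.1) fun K => ?_
  choose U hU hKU using fun j => (h𝒰 j).2 K.1 K.2.1 K.2.2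
  have hKV : K.1 ⊆ ⋂ j ∈ Finset.range (m + 1), U j := subset_iInter₂ fun j _ => hKU j
  refine ⟨⋂ j ∈ Finset.range (m + 1), U j, ⟨⟨isOpen_biInter_finset fun j _ =>
    ((h𝒰 j).1.1 _ (hU j)).1, K.2.2.mono hKV, fun huniv => ((h𝒰 0).1.1 _ (hU 0)).2.2 ?_⟩,
    fun j hj => ⟨U j, hU j, biInter_subset_of_mem (by simpa [Nat.lt_succ_iff] using hj)⟩⟩, hKV⟩
  exact univ_subset_iff.1 (huniv ▸ biInter_subset_of_mem (by simp))

theorem omegaHurewicz_of_sfin_groupables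
    (h : Sfin (OmegaCovers X) (groupables (OmegaCovers X))) : OmegaHurewicz X := by
  refine .of_omegaCovers fun 𝒰 h𝒰 => ?_
  obtain ⟨ℱ, hℱ, -, φ, hφfin, hφ⟩ := h (refiningCovers 𝒰) (refiningCovers_mem_omegaCovers h𝒰)
  exact exists_selection_of_groupable (fun n => (hℱ n).2) id
    (fun n V hV => ((hℱ n).1 hV).2) hφfin fun K =>
      exists_forall_ge_of_groupable hφ fun D hD => hD.2 K.1 K.2.1 K.2.2

end Realignment

section Play

variable {X : Type u} [TopologicalSpace X]

def finiteMovesSnd {T : Type*} (s : List (Set (ℕ × T))) : Set T :=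
  Prod.snd '' {q | ∃ l ∈ s, l.Finite ∧ q ∈ l}

theorem finite_finiteMovesSnd {T : Type*} (s : List (Set (ℕ × T))) :
    (finiteMovesSnd s).Finite := by
  have hfin : {l | l ∈ s ∧ l.Finite}.Finite := s.finite_toSet.subset fun _ hl => hl.1
  refine ((hfin.biUnion fun _ hl => hl.2).subset ?_).image _
  rintro q ⟨l, hl, hlf, hq⟩
  exact mem_biUnion (show l ∈ {l | l ∈ s ∧ l.Finite} from ⟨hl, hlf⟩) hq

theorem mem_finiteMovesSnd_histOf {T : Type*} {G : ℕ → Set (ℕ × T)} {j n : ℕ} {t : T}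
    (hG : (G j).Finite) (hj : j < n) (ht : t ∈ Prod.snd '' G j) :
    t ∈ finiteMovesSnd (HurewiczSelection.histOf G n) := by
  obtain ⟨q, hq, rfl⟩ := ht
  exact ⟨q, ⟨G j, HurewiczSelection.mem_histOf.2 ⟨j, hj, rfl⟩, hG, hq⟩, rfl⟩

/- Playing the game of `HurewiczSelection.exists_play` against the strategy that offers, at move
`n`, the members of `𝒮 n` not chosen before. The pairs `(n, t)` let the covering relation depend
on the move. -/
theorem OmegaHurewicz.exists_pairwise_disjoint [Nonempty X] (h : OmegaHurewicz X) {T : Type*}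
    (b : ℕ → T → Set X) (𝒮 : ℕ → Set T) (hb : ∀ n, ∀ t ∈ 𝒮 n, IsOpen (b n t))
    (h𝒮 : ∀ n (D : Set T), D.Finite → ∀ K : PFin X, ∃ t ∈ 𝒮 n \ D, K.1 ⊆ b n t) :
    ∃ G : ℕ → Set T, (∀ n, G n ⊆ 𝒮 n ∧ (G n).Finite) ∧ Pairwise (Disjoint on G) ∧
      ∀ K : PFin X, ∃ m, ∀ n ≥ m, ∃ t ∈ G n, K.1 ⊆ b n t := by
  have h' : HurewiczSelection {q : ℕ × T | IsOpen (b q.1 q.2)}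
      fun (K : PFin X) q => K.1 ⊆ b q.1 q.2 :=
    h.comap (fun q => b q.1 q.2) (fun _ hq => hq) (fun _ _ h => h) (fun _ _ _ h => h)
  obtain ⟨G, hG, hwin⟩ := h'.exists_play
    (fun s => Prod.mk s.length '' (𝒮 s.length \ finiteMovesSnd s)) fun s =>
      ⟨by rintro _ ⟨t, ht, rfl⟩; exact hb _ t ht.1, fun K =>
        let ⟨t, ht, hKt⟩ := h𝒮 s.length _ (finite_finiteMovesSnd s) K
        ⟨_, mem_image_of_mem _ ht, hKt⟩⟩
  have hGn : ∀ n, G n ⊆ Prod.mk n '' (𝒮 n \ ⋃ j < n, Prod.snd '' G j) := fun n q hq => by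
    have hq' := (hG n).1 hq
    rw [HurewiczSelection.length_histOf] at hq'
    obtain ⟨t, ⟨ht, htu⟩, rfl⟩ := hq'
    refine ⟨t, ⟨ht, fun htG => htu ?_⟩, rfl⟩
    obtain ⟨j, hj, htj⟩ := mem_iUnion₂.1 htG
    exact mem_finiteMovesSnd_histOf (hG j).2 hj htj
  refine ⟨fun n => Prod.snd '' G n, fun n => ⟨?_, (hG n).2.image _⟩, ?_, fun K => ?_⟩
  · rintro _ ⟨q, hq, rfl⟩
    obtain ⟨t, ⟨ht, -⟩, rfl⟩ := hGn n hq
    exact ht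
  · refine (pairwise_disjoint_on _).2 fun j n hjn => disjoint_left.2 ?_
    rintro _ hj ⟨q, hq, rfl⟩
    obtain ⟨t, ⟨-, htu⟩, rfl⟩ := hGn n hq
    exact htu (mem_iUnion₂.2 ⟨j, hjn, hj⟩)
  · obtain ⟨m, hm⟩ := hwin K
    refine ⟨m, fun n hn => ?_⟩
    obtain ⟨q, hq, hKq⟩ := hm n hn
    obtain ⟨t, -, rfl⟩ := hGn n hq
    exact ⟨t, mem_image_of_mem _ hq, hKq⟩

theorem omegaCovers_diff_finite {𝒰 : Set (Set X)} (h𝒰 : 𝒰 ∈ OmegaCovers X) {D : Set (Set X)}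
    (hD : D.Finite) (K : PFin X) : ∃ U ∈ 𝒰 \ D, K.1 ⊆ U := by
  have : Nonempty X := ⟨K.2.2.some⟩
  choose! x hx using fun U (hU : U ∈ D ∩ 𝒰) => nonempty_compl.2 (h𝒰.1.1 U hU.2).2.2
  obtain ⟨U, hU, hKU⟩ := h𝒰.2 (K.1 ∪ x '' (D ∩ 𝒰)) (K.2.1.union ((hD.inter_of_left _).image x))
    (K.2.2.mono subset_union_left)
  exact ⟨U, ⟨hU, fun hUD => hx U ⟨hUD, hU⟩ (hKU (Or.inr (mem_image_of_mem x ⟨hUD, hU⟩)))⟩,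
    subset_union_left.trans hKU⟩

theorem OmegaHurewicz.sfin_groupables [Nonempty X] (h : OmegaHurewicz X) :
    Sfin (OmegaCovers X) (groupables (OmegaCovers X)) := by
  intro 𝒰 h𝒰
  obtain ⟨G, hG, hdisj, hwit⟩ := h.exists_pairwise_disjoint (fun _ => id) 𝒰
    (fun n U hU => ((h𝒰 n).1.1 U hU).1) fun n _ hD K => omegaCovers_diff_finite (h𝒰 n) hD K
  refine ⟨G, hG, iUnion_mem_groupables (fun n => (hG n).2) hdisj fun J hJ =>
    mem_omegaCovers (fun U hU => ?_) fun K => ?_⟩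
  · obtain ⟨n, -, hU⟩ := mem_iUnion₂.1 hU
    exact (h𝒰 n).1.1 U ((hG n).1 hU)
  · obtain ⟨m, hm⟩ := hwit K
    obtain ⟨n, hnJ, hmn⟩ := hJ.exists_gt m
    obtain ⟨U, hU, hKU⟩ := hm n hmn.le
    exact ⟨U, mem_biUnion hnJ hU, hKU⟩

end Play

theorem diff_mem_omegaPt {Y : Type u} [TopologicalSpace Y] [T1Space Y] {y : Y} {A D : Set Y}
    (hA : A ∈ OmegaPt Y y) (hD : D.Finite) : A \ D ∈ OmegaPt Y y := by
  refine ⟨?_, fun hy => hA.2 hy.1⟩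
  have hy := hA.1
  rw [← sdiff_union_inter A D, closure_union,
    (hD.subset inter_subset_right).isClosed.closure_eq] at hy
  exact hy.resolve_right fun hy => hA.2 hy.1

theorem sfin_groupables_of_reznichenko {Y : Type u} [TopologicalSpace Y] (hR : Reznichenko Y)
    (hF : CountableFanTightness Y) (y : Y) : Sfin (OmegaPt Y y) (groupables (OmegaPt Y y)) :=
  fun A hA =>
    let ⟨ℱ, hℱ, hB⟩ := hF y A hA
    ⟨ℱ, hℱ, hB, hR y _ hB (countable_iUnion fun n => (hℱ n).2.countable)⟩

section FunctionSpace

variable {X : Type u} [TopologicalSpace X]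

theorem mem_closure_iff_forall_abs_sub_lt {y : Cp X} {A : Set (Cp X)} :
    y ∈ closure A ↔ ∀ F : Set X, F.Finite → ∀ ε > 0, ∃ f ∈ A, ∀ x ∈ F, |f.1 x - y.1 x| < ε := by
  have hbasis : (𝓝 y.1).HasBasis (fun If : Set X × (X → ℝ) => If.1.Finite ∧ ∀ x ∈ If.1, 0 < If.2 x)
      fun If => If.1.pi fun x => Metric.ball (y.1 x) (If.2 x) := by
    rw [nhds_pi]
    exact Filter.hasBasis_pi fun x => Metric.nhds_basis_ball
  rw [closure_subtype, mem_closure_iff_nhds_basis hbasis]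
  constructor
  · intro h F hF ε hε
    obtain ⟨_, ⟨f, hfA, rfl⟩, hf⟩ := h (F, fun _ => ε) ⟨hF, fun _ _ => hε⟩
    exact ⟨f, hfA, fun x hx => by simpa [Real.dist_eq] using hf x hx⟩
  · rintro h ⟨I, ε⟩ ⟨hI, hε⟩
    have hδ : ∀ᶠ δ in 𝓝[>] (0 : ℝ), ∀ x ∈ I, δ < ε x := (eventually_all_finite hI).2
      fun x hx => nhdsWithin_le_nhds (eventually_lt_nhds (hε x hx))
    obtain ⟨δ, hδε, hδ⟩ := (hδ.and self_mem_nhdsWithin).exists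
    obtain ⟨f, hfA, hf⟩ := h I hI δ hδ
    exact ⟨f.1, ⟨f, hfA, rfl⟩, fun x hx => by
      rw [Metric.mem_ball, Real.dist_eq]; exact (hf x hx).trans (hδε x hx)⟩

theorem exists_cp_eqOn_zero_one [CompletelyRegularSpace X] {F V : Set X} (hF : F.Finite)
    (hV : IsOpen V) (hFV : F ⊆ V) : ∃ f : Cp X, (∀ x ∈ F, f.1 x = 0) ∧ ∀ x ∉ V, f.1 x = 1 := by
  choose! g hg using fun x (hx : x ∈ F) =>
    CompletelyRegularSpace.completely_regular_isOpen x V hV (hFV hx)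
  refine ⟨⟨fun z => ∏ x ∈ hF.toFinset, (g x z : ℝ), continuous_finsetProd _ fun x hx =>
    continuous_subtype_val.comp (hg x (hF.mem_toFinset.1 hx)).1⟩, fun z hz => ?_, fun z hz => ?_⟩
  · exact Finset.prod_eq_zero (hF.mem_toFinset.2 hz) (by simp [(hg z hz).2.1])
  · exact Finset.prod_eq_one fun x hx => by simp [(hg x (hF.mem_toFinset.1 hx)).2.2 hz]

theorem omegaHurewicz_of_sfin_omegaPt_groupables [CompletelyRegularSpace X] [Nonempty X]
    (h : Sfin (OmegaPt (Cp X) (zeroCp X)) (groupables (OmegaPt (Cp X) (zeroCp X)))) :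
    OmegaHurewicz X := by
  refine .of_omegaCovers fun 𝒰 h𝒰 => ?_
  let A : ℕ → Set (Cp X) := fun m => {f | ∃ V ∈ refiningCovers 𝒰 m, ∀ x ∉ V, f.1 x = 1}
  have hA : ∀ m, A m ∈ OmegaPt (Cp X) (zeroCp X) := fun m => by
    refine ⟨mem_closure_iff_forall_abs_sub_lt.2 fun F hF ε hε => ?_, ?_⟩
    · obtain ⟨V, hV, hFV⟩ := (refiningCovers_mem_omegaCovers h𝒰 m).2
        (insert (Classical.arbitrary X) F) (hF.insert _) (insert_nonempty _ _)
      obtain ⟨f, hf0, hf1⟩ := exists_cp_eqOn_zero_one (hF.insert _) hV.1.1 hFV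
      exact ⟨f, ⟨V, hV, hf1⟩, fun x hx => by simp [hf0 x (mem_insert_of_mem _ hx), zeroCp, hε]⟩
    · rintro ⟨V, hV, hf1⟩
      obtain ⟨x, hx⟩ := nonempty_compl.2 hV.1.2.2
      simpa [zeroCp] using hf1 x hx
  obtain ⟨𝒜, h𝒜, -, ψ, hψfin, hψ⟩ := h A hA
  refine exists_selection_of_groupable (fun n => (h𝒜 n).2) (fun f => {x | |f.1 x| < 1})
    (fun n f hf j hj => ?_) hψfin fun K => exists_forall_ge_of_groupable hψ fun D hD => ?_
  · obtain ⟨V, hV, hf1⟩ := (h𝒜 n).1 hf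
    obtain ⟨U, hU, hVU⟩ := hV.2 j hj
    refine ⟨U, hU, fun x hx => hVU (by_contra fun hxV => ?_)⟩
    simp [hf1 x hxV] at hx
  · obtain ⟨f, hfD, hf⟩ := mem_closure_iff_forall_abs_sub_lt.1 hD.1 K.1 K.2.1 1 one_pos
    exact ⟨f, hfD, fun x hx => by simpa [zeroCp] using hf x hx⟩

theorem OmegaHurewicz.sfin_omegaPt_groupables [Nonempty X] (h : OmegaHurewicz X) (y : Cp X) :
    Sfin (OmegaPt (Cp X) y) (groupables (OmegaPt (Cp X) y)) := by
  intro A hA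
  obtain ⟨G, hG, hdisj, hwit⟩ := h.exists_pairwise_disjoint
    (fun n (f : Cp X) => {x | |f.1 x - y.1 x| < 1 / ((n : ℝ) + 1)}) A
    (fun _ f _ => isOpen_lt (continuous_abs.comp (f.2.sub y.2)) continuous_const)
    fun n _ hD K => mem_closure_iff_forall_abs_sub_lt.1 (diff_mem_omegaPt (hA n) hD).1
      K.1 K.2.1 _ Nat.one_div_pos_of_nat
  refine ⟨G, hG, iUnion_mem_groupables (fun n => (hG n).2) hdisj fun J hJ =>
    ⟨mem_closure_iff_forall_abs_sub_lt.2 fun F hF ε hε => ?_, fun hy => ?_⟩⟩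
  · obtain ⟨N, hN⟩ := exists_nat_one_div_lt hε
    obtain ⟨m, hm⟩ := hwit ⟨insert (Classical.arbitrary X) F, hF.insert _, insert_nonempty _ _⟩
    obtain ⟨n, hnJ, hn⟩ := hJ.exists_gt (max m N)
    obtain ⟨f, hf, hfK⟩ := hm n (le_of_max_le_left hn.le)
    exact ⟨f, mem_biUnion hnJ hf, fun x hx => (hfK (mem_insert_of_mem _ hx)).trans
      ((Nat.one_div_le_one_div (le_of_max_le_right hn.le)).trans_lt hN)⟩
  · obtain ⟨n, -, hn⟩ := mem_iUnion₂.1 hy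
    exact (hA n).2 ((hG n).1 hn)

theorem OmegaHurewicz.reznichenko [Nonempty X] (h : OmegaHurewicz X) : Reznichenko (Cp X) := by
  intro y A hA hAc
  obtain ⟨ℱ, hℱ, -, hB⟩ := h.sfin_omegaPt_groupables y (fun _ => A) fun _ => hA
  exact hB.of_subset (iUnion_subset fun n => (hℱ n).1) hAc fun D hD D' hDD' hD'A =>
    ⟨closure_mono hDD' hD.1, fun hy => hA.2 (hD'A hy)⟩

theorem OmegaHurewicz.countableFanTightness [Nonempty X] (h : OmegaHurewicz X) :
    CountableFanTightness (Cp X) := fun y A hA =>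
  let ⟨ℱ, hℱ, hB⟩ := h.sfin_omegaPt_groupables y A hA
  ⟨ℱ, hℱ, hB.1⟩

end FunctionSpace

end

theorem statement12_general {X : Type u} [TopologicalSpace X] [CompletelyRegularSpace X]
    [Infinite X] :
    List.TFAE
      [HurewiczProp (PFin X),
       Sfin (OmegaCovers X) (groupables (OmegaCovers X)),
       ∀ n : ℕ, 1 ≤ n → HurewiczProp (Fin n → X),
       Sfin (OmegaPt (Cp X) (zeroCp X)) (groupables (OmegaPt (Cp X) (zeroCp X))),
       Reznichenko (Cp X) ∧ CountableFanTightness (Cp X)] := by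
  tfae_have 1 → 2 := fun h => h.omegaHurewicz.sfin_groupables
  tfae_have 2 → 3 := fun h => (omegaHurewicz_of_sfin_groupables h).hurewiczProp_pi
  tfae_have 3 → 1 := fun h => hurewiczProp_pfin_of_forall fun n => h (n + 1) n.succ_pos
  tfae_have 1 → 5 := fun h => ⟨h.omegaHurewicz.reznichenko, h.omegaHurewicz.countableFanTightness⟩
  tfae_have 5 → 4 := fun h => sfin_groupables_of_reznichenko h.1 h.2 (zeroCp X)
  tfae_have 4 → 3 := fun h => (omegaHurewicz_of_sfin_omegaPt_groupables h).hurewiczProp_pi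
  tfae_finish

theorem statement12 {X : Type u} [TopologicalSpace X] [T2Space X] [CompletelyRegularSpace X]
    [Infinite X] :
    List.TFAE
      [HurewiczProp (PFin X),
       Sfin (OmegaCovers X) (groupables (OmegaCovers X)),
       ∀ n : ℕ, 1 ≤ n → HurewiczProp (Fin n → X),
       Sfin (OmegaPt (Cp X) (zeroCp X)) (groupables (OmegaPt (Cp X) (zeroCp X))),
       Reznichenko (Cp X) ∧ CountableFanTightness (Cp X)] :=
  statement12_general
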